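/- arXiv:1509.07206 — 2 statements merged into one kernel-verified Lean document; each statement's English description precedes it below -/
import Mathlib

section
/- For every cost-trace w satisfying the κ-condition, every position n, and every valuation α: (w,n,α) ⊨ G_{>x}φ if and only if for all j ≥ 0 with Σ_{k=n}^{n+j-1} cₖ > α(x) one has (w,n+j,α) ⊨ φ, where G_{>x}φ is defined as F_{≤x} G X (¬κ ∨ G φ). -/
inductive cPLTL (P V : Type) : Type
  | pos (p : P)
  | neg (p : P)
  | and (φ ψ : cPLTL P V)
  | or (φ ψ : cPLTL P V)
  | next (φ : cPLTL P V)
  | until_ (φ ψ : cPLTL P V)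
  | release (φ ψ : cPLTL P V)
  | fle (z : V) (φ : cPLTL P V)
  | gle (z : V) (φ : cPLTL P V)

def cost (c : ℕ → ℕ) (n j : ℕ) : ℕ := ∑ k ∈ Finset.range j, c (n + k)

def Sat {P V : Type} (w : ℕ → Set P) (c : ℕ → ℕ) (α : V → ℕ) : cPLTL P V → ℕ → Prop
  | .pos p, n => p ∈ w n
  | .neg p, n => p ∉ w n
  | .and φ ψ, n => Sat w c α φ n ∧ Sat w c α ψ n
  | .or φ ψ, n => Sat w c α φ n ∨ Sat w c α ψ n
  | .next φ, n => Sat w c α φ (n + 1)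
  | .until_ φ ψ, n => ∃ j, Sat w c α ψ (n + j) ∧ ∀ k < j, Sat w c α φ (n + k)
  | .release φ ψ, n => ∀ j, Sat w c α ψ (n + j) ∨ ∃ k < j, Sat w c α φ (n + k)
  | .fle z φ, n => ∃ j, cost c n j ≤ α z ∧ Sat w c α φ (n + j)
  | .gle z φ, n => ∀ j, cost c n j ≤ α z → Sat w c α φ (n + j)

/-- ff := κ ∧ ¬κ, Gψ := ff R ψ. -/
def Gm {P V : Type} (κ : P) (ψ : cPLTL P V) : cPLTL P V :=
  .release (.and (.pos κ) (.neg κ)) ψ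

/-- G_{>x}φ := F_{≤x} G X (¬κ ∨ G φ). -/
def GGt {P V : Type} (κ : P) (x : V) (φ : cPLTL P V) : cPLTL P V :=
  .fle x (Gm κ (.next (.or (.neg κ) (Gm κ φ))))

/-!
Reading `κ ∈ w (m + 1)` as `0 < c m`, the formula `G_{>x}φ` says that beyond some prefix of cost
at most `α x`, every step of positive cost is followed by `φ` forever. A prefix costing more than
`α x` contains such a step beyond any prefix within budget. Conversely, beyond a prefix of maximal
cost among those within budget, any step of positive cost pushes the cost above `α x`.
-/

lemma cost_mono (c : ℕ → ℕ) (n : ℕ) : Monotone (cost c n) := fun _ _ h =>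
  Finset.sum_le_sum_of_subset (Finset.range_subset_range.2 h)

lemma cost_lt_cost_iff {c : ℕ → ℕ} {n i j : ℕ} :
    cost c n i < cost c n j ↔ ∃ k, i ≤ k ∧ k < j ∧ 0 < c (n + k) := by
  constructor
  · intro h
    have hij : i ≤ j := ((cost_mono c n).reflect_lt h).le
    rw [cost, cost, ← Finset.sum_range_add_sum_Ico _ hij, lt_add_iff_pos_right,
      Finset.sum_pos_iff] at h
    obtain ⟨k, hk, hpos⟩ := h
    exact ⟨k, (Finset.mem_Ico.1 hk).1, (Finset.mem_Ico.1 hk).2, hpos⟩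
  · rintro ⟨k, hik, hkj, hpos⟩
    calc cost c n i ≤ cost c n k := cost_mono c n hik
      _ < cost c n (k + 1) := by
        rw [cost, cost, Finset.sum_range_succ]
        exact Nat.lt_add_of_pos_right hpos
      _ ≤ cost c n j := cost_mono c n hkj

lemma exists_max_image_le_of_le (f : ℕ → ℕ) {b j : ℕ} (hj : f j ≤ b) :
    ∃ j₀, f j₀ ≤ b ∧ ∀ j, f j ≤ b → f j ≤ f j₀ := by
  classical
  obtain ⟨j₀, hj₀⟩ := Nat.findGreatest_spec hj ⟨j, rfl⟩ (P := fun v => ∃ j, f j = v)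
  refine ⟨j₀, hj₀ ▸ Nat.findGreatest_le b, fun j' hj' => hj₀ ▸ Nat.le_findGreatest hj' ⟨j', rfl⟩⟩

section Semantics

variable {P V : Type} (κ : P) (w : ℕ → Set P) (c : ℕ → ℕ) (α : V → ℕ)

lemma sat_Gm_iff (ψ : cPLTL P V) (m : ℕ) :
    Sat w c α (Gm κ ψ) m ↔ ∀ i, Sat w c α ψ (m + i) := by
  simp [Gm, Sat]

lemma sat_GGt_iff (hκ : ∀ n, 0 < c n ↔ κ ∈ w (n + 1)) (n : ℕ) (x : V) (φ : cPLTL P V) :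
    Sat w c α (GGt κ x φ) n ↔
      ∃ j₀, cost c n j₀ ≤ α x ∧ ∀ k ≥ j₀, 0 < c (n + k) → ∀ j > k, Sat w c α φ (n + j) := by
  simp only [GGt, Sat, sat_Gm_iff, ← hκ]
  refine exists_congr fun j₀ => and_congr_right fun _ =>
    ⟨fun h k hk hpos j hkj => ?_, fun h i => ?_⟩
  · obtain ⟨i, rfl⟩ := Nat.exists_eq_add_of_le hk
    obtain ⟨l, rfl⟩ := Nat.exists_eq_add_of_le (show _ + 1 ≤ j from hkj)
    have hpos' : 0 < c (n + j₀ + i) := by rwa [← add_assoc] at hpos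
    simpa only [add_assoc] using (h i).resolve_left (not_not_intro hpos') l
  · refine imp_iff_not_or.1 fun hpos l => ?_
    simpa only [add_assoc] using
      h (j₀ + i) (Nat.le_add_right _ _) (by rwa [← add_assoc]) (j₀ + i + 1 + l) (by omega)

end Semantics

theorem G_gt_correct {P V : Type} (κ : P) (w : ℕ → Set P) (c : ℕ → ℕ)
    (hκ : ∀ n, 0 < c n ↔ κ ∈ w (n + 1))
    (n : ℕ) (α : V → ℕ) (x : V) (φ : cPLTL P V) :
    Sat w c α (GGt κ x φ) n ↔
      ∀ j, α x < cost c n j → Sat w c α φ (n + j) := by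
  rw [sat_GGt_iff κ w c α hκ]
  constructor
  · rintro ⟨j₀, hj₀, hφ⟩ j hj
    obtain ⟨k, hj₀k, hkj, hpos⟩ := cost_lt_cost_iff.1 (hj₀.trans_lt hj)
    exact hφ k hj₀k hpos j hkj
  · intro hφ
    obtain ⟨j₀, hj₀, hmax⟩ :=
      exists_max_image_le_of_le (cost c n) (b := α x) (j := 0) (by simp [cost])
    refine ⟨j₀, hj₀, fun k hj₀k hpos j hkj => hφ j (lt_of_not_ge fun hj => ?_)⟩
    exact (hmax j hj).not_gt (cost_lt_cost_iff.2 ⟨k, hj₀k, hkj, hpos⟩)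
end

section
/- Every pumpable block can be pumped to arbitrarily high cost: if a finite path segment (block) in a finite edge-weighted directed graph contains a vertex repetition forming a cycle of non-zero cost, then for every bound B ∈ ℕ there is a finite path with the same first and last vertex, visiting only vertices of the original segment, whose total cost exceeds B, obtained by repeating the cycle sufficiently often. -/
/-!
If `v i = v j`, the walk `v 0, …, v j, v (i + 1), …, v m` is again a walk: it traverses the cycle
`v i, …, v j` twice, so its cost exceeds that of `v` by the cycle cost `c`, it still contains the
cycle at the same positions, and it visits no new vertex. Iterating `n` times yields a walk with the
same endpoints of cost at least `n * c`, which exceeds any bound once `c > 0`.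
-/

open Finset

section Pumping

variable {V : Type*}

def IsWalk (E : V → V → Prop) (v : ℕ → V) (m : ℕ) : Prop :=
  ∀ k < m, E (v k) (v (k + 1))

def pathCost (cst : V → V → ℕ) (v : ℕ → V) (a b : ℕ) : ℕ :=
  ∑ k ∈ Ico a b, cst (v k) (v (k + 1))

lemma pathCost_add_pathCost {cst : V → V → ℕ} {v : ℕ → V} {a b c : ℕ} (hab : a ≤ b)
    (hbc : b ≤ c) : pathCost cst v a b + pathCost cst v b c = pathCost cst v a c :=
  sum_Ico_consecutive _ hab hbc

lemma pathCost_congr {cst : V → V → ℕ} {v w : ℕ → V} {a b : ℕ}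
    (h : ∀ k, a ≤ k → k ≤ b → v k = w k) : pathCost cst v a b = pathCost cst w a b :=
  sum_congr rfl fun k hk => by
    rw [mem_Ico] at hk
    rw [h k hk.1 (by omega), h (k + 1) (by omega) hk.2]

/-- The walk `v 0, …, v j` followed by `v (i + 1), …, v m`, of length `m + (j - i)`. -/
def repeatCycle (v : ℕ → V) (i j : ℕ) (k : ℕ) : V :=
  if k ≤ j then v k else v (k - (j - i))

variable {v : ℕ → V} {i j m : ℕ}

lemma repeatCycle_of_le {k : ℕ} (hk : k ≤ j) : repeatCycle v i j k = v k :=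
  if_pos hk

lemma repeatCycle_of_ge (hij : i ≤ j) (hrep : v i = v j) {k : ℕ} (hk : j ≤ k) :
    repeatCycle v i j k = v (k - (j - i)) := by
  rcases hk.eq_or_lt with rfl | hlt
  · rw [repeatCycle_of_le le_rfl, Nat.sub_sub_self hij, hrep]
  · exact if_neg (by omega)

lemma isWalk_repeatCycle {E : V → V → Prop} (hv : IsWalk E v m) (hij : i ≤ j) (hjm : j ≤ m)
    (hrep : v i = v j) : IsWalk E (repeatCycle v i j) (m + (j - i)) := by
  intro k hk
  rcases lt_or_ge k j with hkj | hjk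
  · rw [repeatCycle_of_le hkj.le, repeatCycle_of_le hkj]
    exact hv k (by omega)
  · rw [repeatCycle_of_ge hij hrep hjk, repeatCycle_of_ge hij hrep (by omega),
      show k + 1 - (j - i) = k - (j - i) + 1 by omega]
    exact hv _ (by omega)

lemma repeatCycle_last (hij : i ≤ j) (hjm : j ≤ m) (hrep : v i = v j) :
    repeatCycle v i j (m + (j - i)) = v m := by
  rw [repeatCycle_of_ge hij hrep (by omega), Nat.add_sub_cancel]

lemma repeatCycle_image_subset (hij : i ≤ j) (hjm : j ≤ m) (hrep : v i = v j) :
    repeatCycle v i j '' Set.Iic (m + (j - i)) ⊆ v '' Set.Iic m := by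
  rintro _ ⟨k, hk, rfl⟩
  rcases le_total k j with hkj | hjk
  · exact ⟨k, by simp only [Set.mem_Iic] at hk ⊢; omega, (repeatCycle_of_le hkj).symm⟩
  · exact ⟨k - (j - i), by simp only [Set.mem_Iic] at hk ⊢; omega,
      (repeatCycle_of_ge hij hrep hjk).symm⟩

lemma pathCost_repeatCycle {cst : V → V → ℕ} (hij : i ≤ j) (hjm : j ≤ m) (hrep : v i = v j) :
    pathCost cst (repeatCycle v i j) 0 (m + (j - i)) = pathCost cst v 0 m + pathCost cst v i j := by
  have hprefix : pathCost cst (repeatCycle v i j) 0 j = pathCost cst v 0 j :=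
    pathCost_congr fun k _ hk => repeatCycle_of_le hk
  have hsuffix : pathCost cst (repeatCycle v i j) j (m + (j - i)) = pathCost cst v i m := by
    have hshift : pathCost cst (repeatCycle v i j) j (m + (j - i)) =
        ∑ k ∈ Ico (i + (j - i)) (m + (j - i)), cst (v (k - (j - i))) (v (k - (j - i) + 1)) := by
      rw [Nat.add_sub_cancel' hij]
      refine sum_congr rfl fun k hk => ?_
      rw [mem_Ico] at hk
      rw [repeatCycle_of_ge hij hrep hk.1, repeatCycle_of_ge hij hrep (by omega),
        show k + 1 - (j - i) = k - (j - i) + 1 by omega]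
    rw [hshift, sum_Ico_add_right_sub_eq (f := fun k => cst (v k) (v (k + 1)))]
    rfl
  rw [← pathCost_add_pathCost (Nat.zero_le j) (by omega), hprefix, hsuffix,
    ← pathCost_add_pathCost (Nat.zero_le i) hij, ← pathCost_add_pathCost hij hjm,
    ← pathCost_add_pathCost (Nat.zero_le i) (hij.trans hjm), ← pathCost_add_pathCost hij hjm]
  ring

/-- The walk `v` with its cycle from position `i` to position `j` traversed `n + 1` times. -/
def pump (v : ℕ → V) (i j n : ℕ) : ℕ → V :=
  (fun w => repeatCycle w i j)^[n] v

lemma pump_succ (n : ℕ) : pump v i j (n + 1) = repeatCycle (pump v i j n) i j :=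
  Function.iterate_succ_apply' _ _ _

lemma pump_of_le (n : ℕ) {k : ℕ} (hk : k ≤ j) : pump v i j n k = v k := by
  induction n with
  | zero => rfl
  | succ n ih => rw [pump_succ, repeatCycle_of_le hk, ih]

lemma pump_cycle (hrep : v i = v j) (hij : i ≤ j) (n : ℕ) : pump v i j n i = pump v i j n j := by
  rw [pump_of_le n hij, pump_of_le n le_rfl, hrep]

variable (hij : i ≤ j) (hjm : j ≤ m) (hrep : v i = v j)
include hij hjm hrep

lemma isWalk_pump {E : V → V → Prop} (hv : IsWalk E v m) (n : ℕ) :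
    IsWalk E (pump v i j n) (m + n * (j - i)) := by
  induction n with
  | zero => simpa [pump] using hv
  | succ n ih =>
    rw [pump_succ, add_one_mul, ← add_assoc]
    exact isWalk_repeatCycle ih hij (by omega) (pump_cycle hrep hij n)

lemma pump_last (n : ℕ) : pump v i j n (m + n * (j - i)) = v m := by
  induction n with
  | zero => simp [pump]
  | succ n ih =>
    rw [pump_succ, add_one_mul, ← add_assoc,
      repeatCycle_last hij (by omega) (pump_cycle hrep hij n), ih]

lemma pump_image_subset (n : ℕ) :
    pump v i j n '' Set.Iic (m + n * (j - i)) ⊆ v '' Set.Iic m := by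
  induction n with
  | zero => simp [pump]
  | succ n ih =>
    rw [pump_succ, add_one_mul, ← add_assoc]
    exact (repeatCycle_image_subset hij (by omega) (pump_cycle hrep hij n)).trans ih

lemma pathCost_pump (cst : V → V → ℕ) (n : ℕ) :
    pathCost cst (pump v i j n) 0 (m + n * (j - i)) =
      pathCost cst v 0 m + n * pathCost cst v i j := by
  induction n with
  | zero => simp [pump]
  | succ n ih =>
    have hcycle : pathCost cst (pump v i j n) i j = pathCost cst v i j :=
      pathCost_congr fun k _ hk => pump_of_le n hk
    rw [pump_succ, add_one_mul, ← add_assoc,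
      pathCost_repeatCycle hij (by omega) (pump_cycle hrep hij n), ih, hcycle]
    ring

end Pumping

/-- Every pumpable block can be pumped to arbitrarily high cost: if a finite
path segment contains a vertex repetition forming a cycle of non-zero cost,
then for every bound B there is a finite path with the same first and last
vertex, visiting only vertices of the original segment, whose total cost
exceeds B. -/
theorem pump_block {V : Type} (E : V → V → Prop) (cst : V → V → ℕ)
    (m : ℕ) (v : ℕ → V) (hpath : ∀ k < m, E (v k) (v (k + 1)))
    (i j : ℕ) (hij : i < j) (hjm : j ≤ m) (hrep : v i = v j)
    (hcyc : 0 < ∑ k ∈ Finset.Ico i j, cst (v k) (v (k + 1))) :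
    ∀ B : ℕ, ∃ (L : ℕ) (u : ℕ → V),
      u 0 = v 0 ∧ u L = v m ∧
      (∀ k < L, E (u k) (u (k + 1))) ∧
      (∀ k ≤ L, ∃ t ≤ m, u k = v t) ∧
      B < ∑ k ∈ Finset.range L, cst (u k) (u (k + 1)) := by
  intro B
  refine ⟨m + (B + 1) * (j - i), pump v i j (B + 1), pump_of_le _ (Nat.zero_le j),
    pump_last hij.le hjm hrep _, isWalk_pump hij.le hjm hrep hpath _, fun k hk => ?_, ?_⟩
  · obtain ⟨t, ht, hvt⟩ := pump_image_subset hij.le hjm hrep (B + 1) ⟨k, hk, rfl⟩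
    exact ⟨t, ht, hvt.symm⟩
  · have hcost := pathCost_pump hij.le hjm hrep cst (B + 1)
    rw [pathCost, ← range_eq_Ico] at hcost
    rw [hcost]
    have : B + 1 ≤ (B + 1) * pathCost cst v i j := Nat.le_mul_of_pos_right _ hcyc
    omega
end
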